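/- arXiv:1902.10660 — 5 statements merged into one kernel-verified Lean document; each statement's English description precedes it below -/
import Mathlib

section
/- Let n0 and n1 be real numbers with 0 ≤ n0, 0 < n1 < N1, n0/N0 < n1/N1 and (n0+1)/N0 ≤ n1/N1. Then F(n0+1, n1) < F(n0, n1). (In the decision-tree setting, this says that moving one label-0 example from the right child to the left child strictly decreases the information-gain splitting score; Theorem 1 of the paper.) -/
/-!
For fixed `t`, `F(s, t)` is, up to a constant, `φ s + φ (N0 - s) - φ (s + t) - φ (N0 + N1 - s - t)`
with `φ x = x log x`. Its `s`-derivative is `log (s (N0 + N1 - s - t) / ((N0 - s) (s + t)))`, which is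
negative exactly when `s N1 < N0 t`. So `F(·, t)` strictly decreases on `[0, N0 t / N1]`, an interval
containing `n0` and `n0 + 1`.
-/

/-- The information-gain score function `F(s,t)` (up to positive affine transform),
with `0 · log 0 = 0` holding definitionally since `Real.log 0 = 0`. -/
noncomputable def F (N0 N1 s t : ℝ) : ℝ :=
  s * Real.log (s / (N0 * (s + t))) + t * Real.log (t / (N1 * (s + t))) +
    (N0 - s) * Real.log ((N0 - s) / (N0 * (N0 + N1 - s - t))) +
    (N1 - t) * Real.log ((N1 - t) / (N1 * (N0 + N1 - s - t)))

open Real Set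

lemma mul_log_div_mul {b c : ℝ} (a : ℝ) (hb : b ≠ 0) (hc : c ≠ 0) :
    a * log (a / (b * c)) = a * log a - a * log b - a * log c := by
  rcases eq_or_ne a 0 with rfl | ha
  · simp
  · rw [log_div ha (mul_ne_zero hb hc), log_mul hb hc]
    ring

noncomputable def splitEntropy (N0 N1 t s : ℝ) : ℝ :=
  s * log s + (N0 - s) * log (N0 - s) - (s + t) * log (s + t) -
    (N0 + N1 - s - t) * log (N0 + N1 - s - t)

lemma F_eq_splitEntropy_add {N0 N1 s t : ℝ} (hN0 : N0 ≠ 0) (hN1 : N1 ≠ 0) (hst : s + t ≠ 0)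
    (hM : N0 + N1 - s - t ≠ 0) :
    F N0 N1 s t = splitEntropy N0 N1 t s +
      (t * log t + (N1 - t) * log (N1 - t) - N0 * log N0 - N1 * log N1) := by
  rw [F, mul_log_div_mul s hN0 hst, mul_log_div_mul t hN1 hst, mul_log_div_mul (N0 - s) hN0 hM,
    mul_log_div_mul (N1 - t) hN1 hM, splitEntropy]
  ring

lemma hasDerivAt_splitEntropy {N0 N1 t s : ℝ} (hs : 0 < s) (hsN0 : s < N0) (hst : 0 < s + t)
    (hM : 0 < N0 + N1 - s - t) :
    HasDerivAt (splitEntropy N0 N1 t)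
      (log s - log (N0 - s) - log (s + t) + log (N0 + N1 - s - t)) s := by
  have h₁ := hasDerivAt_mul_log hs.ne'
  have h₂ := (hasDerivAt_mul_log (sub_pos.2 hsN0).ne').comp s ((hasDerivAt_id s).const_sub N0)
  have h₃ := (hasDerivAt_mul_log hst.ne').comp s ((hasDerivAt_id s).add_const t)
  have h₄ := (hasDerivAt_mul_log hM.ne').comp s
    (((hasDerivAt_id s).const_sub (N0 + N1)).sub_const t)
  exact (((h₁.add h₂).sub h₃).sub h₄).congr_deriv (by ring)

lemma log_sub_log_sub_log_add_log_neg {N0 N1 t s : ℝ} (hs : 0 < s) (hsN0 : s < N0)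
    (hst : 0 < s + t) (hM : 0 < N0 + N1 - s - t) (hsN1 : s * N1 < N0 * t) :
    log s - log (N0 - s) - log (s + t) + log (N0 + N1 - s - t) < 0 := by
  have hprod : s * (N0 + N1 - s - t) < (N0 - s) * (s + t) := by linarith
  have hlog := log_lt_log (mul_pos hs hM) hprod
  rw [log_mul hs.ne' hM.ne', log_mul (sub_pos.2 hsN0).ne' hst.ne'] at hlog
  linarith

lemma strictAntiOn_splitEntropy {N0 N1 t : ℝ} (hN0 : 0 < N0) (hN1 : 0 < N1) (ht : 0 < t)
    (htN1 : t < N1) : StrictAntiOn (splitEntropy N0 N1 t) (Icc 0 (N0 * t / N1)) := by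
  have hcont : Continuous (splitEntropy N0 N1 t) := by
    unfold splitEntropy
    fun_prop (disch := exact continuous_mul_log)
  refine strictAntiOn_of_hasDerivWithinAt_neg (convex_Icc _ _) hcont.continuousOn
    (f' := fun s => log s - log (N0 - s) - log (s + t) + log (N0 + N1 - s - t)) ?_ ?_
  all_goals
    rw [interior_Icc]
    rintro s ⟨hs, hsN1⟩
    have hsN1 : s * N1 < N0 * t := (lt_div_iff₀ hN1).1 hsN1
    have hsN0 : s < N0 := by nlinarith
    have hst : 0 < s + t := by linarith
    have hM : 0 < N0 + N1 - s - t := by linarith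
  · exact (hasDerivAt_splitEntropy hs hsN0 hst hM).hasDerivWithinAt
  · exact log_sub_log_sub_log_add_log_neg hs hsN0 hst hM hsN1

theorem stmt0_general (N0 N1 n0 n1 : ℝ) (hN0 : 0 < N0) (hN1 : 0 < N1)
    (hn0 : 0 ≤ n0) (hn1 : 0 < n1) (hn1' : n1 < N1)
    (hle : (n0 + 1) / N0 ≤ n1 / N1) :
    F N0 N1 (n0 + 1) n1 < F N0 N1 n0 n1 := by
  have hbound : n0 + 1 ≤ N0 * n1 / N1 := by
    rw [div_le_div_iff₀ hN0 hN1] at hle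
    rw [le_div_iff₀ hN1]
    linarith
  have hn0N0 : n0 + 1 < N0 := by
    have : N0 * n1 < N0 * N1 := mul_lt_mul_of_pos_left hn1' hN0
    rw [le_div_iff₀ hN1] at hbound
    nlinarith
  have hdecrease : splitEntropy N0 N1 n1 (n0 + 1) < splitEntropy N0 N1 n1 n0 :=
    strictAntiOn_splitEntropy hN0 hN1 hn1 hn1' ⟨hn0, by linarith⟩ ⟨by linarith, hbound⟩
      (by linarith)
  rw [F_eq_splitEntropy_add hN0.ne' hN1.ne' (by linarith) (by linarith),
    F_eq_splitEntropy_add hN0.ne' hN1.ne' (by linarith) (by linarith)]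
  linarith

theorem stmt0 (N0 N1 n0 n1 : ℝ) (hN0 : 0 < N0) (hN1 : 0 < N1)
    (hn0 : 0 ≤ n0) (hn1 : 0 < n1) (hn1' : n1 < N1)
    (hlt : n0 / N0 < n1 / N1) (hle : (n0 + 1) / N0 ≤ n1 / N1) :
    F N0 N1 (n0 + 1) n1 < F N0 N1 n0 n1 :=
  stmt0_general N0 N1 n0 n1 hN0 hN1 hn0 hn1 hn1' hle
end

section
/- Fix a real number n1 with 0 < n1 < N1, and set s* = N0·n1/N1. Then the function s ↦ F(s, n1) is strictly decreasing on the interval [0, s*] and strictly increasing on the interval [s*, N0]; consequently F(·, n1) attains its minimum over [0, N0] uniquely at s = s*, i.e. the point where n0/N0 = n1/N1. -/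
lemma mul_log_div_eq (x c : ℝ) (hc : c ≠ 0) :
    x * Real.log (x / c) = x * Real.log x - x * Real.log c := by
  rcases eq_or_ne x 0 with h | h
  · simp [h]
  · rw [Real.log_div h hc]; ring

theorem stmt5 (N0 N1 n1 : ℝ) (hN0 : 0 < N0) (hN1 : 0 < N1)
    (hn1 : 0 < n1) (hn1' : n1 < N1) :
    StrictAntiOn (fun s => F N0 N1 s n1) (Set.Icc 0 (N0 * n1 / N1)) ∧
    StrictMonoOn (fun s => F N0 N1 s n1) (Set.Icc (N0 * n1 / N1) N0) ∧
    ∀ s ∈ Set.Icc (0 : ℝ) N0, s ≠ N0 * n1 / N1 →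
      F N0 N1 (N0 * n1 / N1) n1 < F N0 N1 s n1 := by
  set m := N0 * n1 / N1 with hm
  have hm0 : 0 < m := by positivity
  have hmN : m < N0 := by
    rw [hm, div_lt_iff₀ hN1]; nlinarith
  set C := n1 * Real.log n1 + (N1 - n1) * Real.log (N1 - n1)
      - N0 * Real.log N0 - N1 * Real.log N1 with hC
  set g : ℝ → ℝ := fun s =>
    s * Real.log s + (N0 - s) * Real.log (N0 - s)
      - (s + n1) * Real.log (s + n1)
      - (N0 + N1 - n1 - s) * Real.log (N0 + N1 - n1 - s) + C with hg
  have hFeq : ∀ s ∈ Set.Icc (0:ℝ) N0, F N0 N1 s n1 = g s := by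
    intro s hs
    obtain ⟨hs0, hsN⟩ := hs
    have h1 : (0:ℝ) < s + n1 := by linarith
    have h2 : (0:ℝ) < N0 + N1 - s - n1 := by linarith
    have e1 : N0 * (s + n1) ≠ 0 := by positivity
    have e2 : N1 * (s + n1) ≠ 0 := by positivity
    have e3 : N0 * (N0 + N1 - s - n1) ≠ 0 := by positivity
    have e4 : N1 * (N0 + N1 - s - n1) ≠ 0 := by positivity
    simp only [F, hg, hC]
    rw [mul_log_div_eq _ _ e1, mul_log_div_eq _ _ e2, mul_log_div_eq _ _ e3,
      mul_log_div_eq _ _ e4,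
      Real.log_mul (ne_of_gt hN0) (ne_of_gt h1), Real.log_mul (ne_of_gt hN1) (ne_of_gt h1),
      Real.log_mul (ne_of_gt hN0) (ne_of_gt h2), Real.log_mul (ne_of_gt hN1) (ne_of_gt h2)]
    have h3 : N0 + N1 - n1 - s = N0 + N1 - s - n1 := by ring
    rw [h3]
    ring
  have hml : Continuous fun x : ℝ => x * Real.log x := Real.continuous_mul_log
  have hgc : Continuous g := by
    apply Continuous.add _ continuous_const
    apply Continuous.sub
    apply Continuous.sub
    · exact hml.add (hml.comp (continuous_const.sub continuous_id))
    · exact hml.comp (continuous_id.add continuous_const)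
    · exact hml.comp (continuous_const.sub continuous_id)
  have hderiv : ∀ s ∈ Set.Ioo (0:ℝ) N0,
      HasDerivAt g (Real.log s - Real.log (N0 - s) - Real.log (s + n1)
        + Real.log (N0 + N1 - n1 - s)) s := by
    intro s hs
    obtain ⟨hs0, hsN⟩ := hs
    have h1 : (0:ℝ) < s + n1 := by linarith
    have h2 : (0:ℝ) < N0 + N1 - n1 - s := by linarith
    have h3 : (0:ℝ) < N0 - s := by linarith
    have d1 : HasDerivAt (fun x : ℝ => x * Real.log x) (Real.log s + 1) s :=
      Real.hasDerivAt_mul_log (ne_of_gt hs0)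
    have d2 : HasDerivAt (fun x : ℝ => (N0 - x) * Real.log (N0 - x))
        ((Real.log (N0 - s) + 1) * (-1)) s :=
      (Real.hasDerivAt_mul_log (ne_of_gt h3)).comp s ((hasDerivAt_id s).const_sub N0)
    have d3 : HasDerivAt (fun x : ℝ => (x + n1) * Real.log (x + n1))
        ((Real.log (s + n1) + 1) * 1) s :=
      by have h := (Real.hasDerivAt_mul_log (ne_of_gt h1)).comp s ((hasDerivAt_id' s).add_const n1); exact h
    have d4 : HasDerivAt (fun x : ℝ => (N0 + N1 - n1 - x) * Real.log (N0 + N1 - n1 - x))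
        ((Real.log (N0 + N1 - n1 - s) + 1) * (-1)) s :=
      (Real.hasDerivAt_mul_log (ne_of_gt h2)).comp s ((hasDerivAt_id s).const_sub (N0 + N1 - n1))
    have := (((d1.add d2).sub d3).sub d4).add_const C
    exact this.congr_deriv (by ring)
  have hA : StrictAntiOn g (Set.Icc 0 m) := by
    apply strictAntiOn_of_deriv_neg (convex_Icc _ _) hgc.continuousOn
    intro x hx
    rw [interior_Icc] at hx
    obtain ⟨hx0, hxm⟩ := hx
    have hxN : x < N0 := lt_trans hxm hmN
    rw [(hderiv x ⟨hx0, hxN⟩).deriv]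
    have h1 : (0:ℝ) < x + n1 := by linarith
    have h2 : (0:ℝ) < N0 + N1 - n1 - x := by linarith
    have h3 : (0:ℝ) < N0 - x := by linarith
    have hxn : x * N1 < N0 * n1 := by
      rw [hm, lt_div_iff₀ hN1] at hxm; linarith
    have key : x * (N0 + N1 - n1 - x) < (N0 - x) * (x + n1) := by nlinarith
    have hlog := Real.log_lt_log (by positivity) key
    rw [Real.log_mul (ne_of_gt hx0) (ne_of_gt h2),
        Real.log_mul (ne_of_gt h3) (ne_of_gt h1)] at hlog
    linarith
  have hM : StrictMonoOn g (Set.Icc m N0) := by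
    apply strictMonoOn_of_deriv_pos (convex_Icc _ _) hgc.continuousOn
    intro x hx
    rw [interior_Icc] at hx
    obtain ⟨hxm, hxN⟩ := hx
    have hx0 : 0 < x := lt_trans hm0 hxm
    rw [(hderiv x ⟨hx0, hxN⟩).deriv]
    have h1 : (0:ℝ) < x + n1 := by linarith
    have h2 : (0:ℝ) < N0 + N1 - n1 - x := by linarith
    have h3 : (0:ℝ) < N0 - x := by linarith
    have hxn : N0 * n1 < x * N1 := by
      rw [hm, div_lt_iff₀ hN1] at hxm; linarith
    have key : (N0 - x) * (x + n1) < x * (N0 + N1 - n1 - x) := by nlinarith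
    have hlog := Real.log_lt_log (by positivity) key
    rw [Real.log_mul (ne_of_gt hx0) (ne_of_gt h2),
        Real.log_mul (ne_of_gt h3) (ne_of_gt h1)] at hlog
    linarith
  have hmem : m ∈ Set.Icc (0:ℝ) N0 := ⟨hm0.le, hmN.le⟩
  refine ⟨?_, ?_, ?_⟩
  · intro a ha b hb hab
    have ha' : a ∈ Set.Icc (0:ℝ) N0 := ⟨ha.1, le_trans ha.2 hmN.le⟩
    have hb' : b ∈ Set.Icc (0:ℝ) N0 := ⟨hb.1, le_trans hb.2 hmN.le⟩
    show F N0 N1 b n1 < F N0 N1 a n1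
    rw [hFeq a ha', hFeq b hb']
    exact hA ha hb hab
  · intro a ha b hb hab
    have ha' : a ∈ Set.Icc (0:ℝ) N0 := ⟨le_trans hm0.le ha.1, ha.2⟩
    have hb' : b ∈ Set.Icc (0:ℝ) N0 := ⟨le_trans hm0.le hb.1, hb.2⟩
    show F N0 N1 a n1 < F N0 N1 b n1
    rw [hFeq a ha', hFeq b hb']
    exact hM ha hb hab
  · intro s hs hne
    rw [hFeq s hs, hFeq m hmem]
    rcases lt_or_gt_of_ne hne with h | h
    · exact hA ⟨hs.1, h.le⟩ (Set.right_mem_Icc.mpr hm0.le) h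
    · exact hM (Set.left_mem_Icc.mpr hmN.le) ⟨h.le, hs.2⟩ h
end

section
/- Let n0 and n1 be real numbers with 0 ≤ n0, 0 < n1 < N1, n0/N0 < n1/N1 and (n0+1)/N0 ≤ n1/N1. Then G(n0+1, n1) < G(n0, n1). (In the decision-tree setting, this says that moving one label-0 example from the right child to the left child strictly decreases the Gini-impurity splitting score; Theorem 2 of the paper.) -/
/-!
Since `(s² + t²)/(s + t) = s - t + 2t²/(s + t)`, up to an additive constant `G` is twice
`t²/a + u²/b`, where `a`, `b` are the sizes of the two children and `t`, `u` their label-1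
counts. Moving a label-0 example to the left trades `u²/(b(b-1))` for `t²/(a(a+1))`, and the
hypotheses say `u/b < t/a` and `u/(b-1) ≤ t/(a+1)`; multiplying them gives the claim.
-/

/-- The Gini-impurity score function `G(s,t)` (up to positive affine transform). -/
noncomputable def G (N0 N1 s t : ℝ) : ℝ :=
  (s ^ 2 + t ^ 2) / (s + t) + ((N0 - s) ^ 2 + (N1 - t) ^ 2) / (N0 + N1 - s - t)

lemma sq_add_sq_div_add {s t : ℝ} (h : s + t ≠ 0) :
    (s ^ 2 + t ^ 2) / (s + t) = s - t + 2 * (t ^ 2 / (s + t)) := by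
  field_simp
  ring

lemma G_eq {N0 N1 s t : ℝ} (h : s + t ≠ 0) (h' : N0 + N1 - s - t ≠ 0) :
    G N0 N1 s t = N0 - N1 + 2 * (t ^ 2 / (s + t) + (N1 - t) ^ 2 / (N0 + N1 - s - t)) := by
  have h'' : N0 - s + (N1 - t) ≠ 0 := by rwa [show N0 - s + (N1 - t) = N0 + N1 - s - t by ring]
  rw [G, sq_add_sq_div_add h, show N0 + N1 - s - t = N0 - s + (N1 - t) by ring,
    sq_add_sq_div_add h'']
  ring

lemma sq_div_sub_sq_div_add_one {x : ℝ} (hx : x ≠ 0) (hx' : x + 1 ≠ 0) (c : ℝ) :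
    c ^ 2 / x - c ^ 2 / (x + 1) = c ^ 2 / (x * (x + 1)) := by
  field_simp
  ring

lemma sq_div_add_sq_div_lt_of_transfer {a c t u : ℝ} (ha : 0 < a) (hc : 0 < c) (hu : 0 < u)
    (ht : 0 ≤ t) (h : u * a < t * (c + 1)) (h' : u * (a + 1) ≤ t * c) :
    t ^ 2 / (a + 1) + u ^ 2 / c < t ^ 2 / a + u ^ 2 / (c + 1) := by
  have key : u ^ 2 * (a * (a + 1)) < t ^ 2 * (c * (c + 1)) :=
    calc u ^ 2 * (a * (a + 1)) = (u * a) * (u * (a + 1)) := by ring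
      _ < (t * (c + 1)) * (t * c) := mul_lt_mul h h' (by positivity) (by positivity)
      _ = t ^ 2 * (c * (c + 1)) := by ring
  have : u ^ 2 / c - u ^ 2 / (c + 1) < t ^ 2 / a - t ^ 2 / (a + 1) := by
    rw [sq_div_sub_sq_div_add_one hc.ne' (by positivity),
      sq_div_sub_sq_div_add_one ha.ne' (by positivity),
      div_lt_div_iff₀ (by positivity) (by positivity)]
    exact key
  linarith

theorem stmt7 (N0 N1 n0 n1 : ℝ) (hN0 : 0 < N0) (hN1 : 0 < N1)
    (hn0 : 0 ≤ n0) (hn1 : 0 < n1) (hn1' : n1 < N1)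
    (hlt : n0 / N0 < n1 / N1) (hle : (n0 + 1) / N0 ≤ n1 / N1) :
    G N0 N1 (n0 + 1) n1 < G N0 N1 n0 n1 := by
  rw [div_lt_div_iff₀ hN0 hN1] at hlt
  rw [div_le_div_iff₀ hN0 hN1] at hle
  have hn0' : n0 + 1 < N0 := lt_of_mul_lt_mul_right (by nlinarith) hN1.le
  have hmove := sq_div_add_sq_div_lt_of_transfer (a := n0 + n1) (c := N0 + N1 - n0 - n1 - 1)
    (t := n1) (u := N1 - n1) (by linarith) (by linarith) (by linarith) hn1.le
    (by linear_combination hlt) (by linear_combination hle)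
  rw [sub_add_cancel] at hmove
  rw [G_eq (by linarith) (by linarith), G_eq (by linarith) (by linarith),
    show N0 + N1 - (n0 + 1) - n1 = N0 + N1 - n0 - n1 - 1 by ring, add_right_comm n0 1 n1]
  linarith
end

section
/- Fix a real number n1 with 0 < n1 < N1 and write m1 = N1 − n1. For every s with 0 < s < N0, writing m0 = N0 − s, the function s ↦ G(s, n1) is differentiable at s with derivative equal to 2·m1·m0·(s·m1 + n1·m0 + 2·n1·m1) / ((s + n1)²·(m0 + m1)²) · (s/m0 − n1/m1). -/
theorem hasDerivAt_sq_add_sq_div_add {b x : ℝ} (h : x + b ≠ 0) :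
    HasDerivAt (fun a : ℝ => (a ^ 2 + b ^ 2) / (a + b))
      ((x ^ 2 + 2 * x * b - b ^ 2) / (x + b) ^ 2) x := by
  have h' := ((hasDerivAt_pow 2 x).add_const (b ^ 2)).div ((hasDerivAt_id x).add_const b) h
  exact h'.congr_deriv (by simp only [id]; ring)

theorem G_eq_add (N0 N1 s t : ℝ) :
    G N0 N1 s t = (s ^ 2 + t ^ 2) / (s + t)
      + ((N0 - s) ^ 2 + (N1 - t) ^ 2) / ((N0 - s) + (N1 - t)) := by
  rw [G, show N0 + N1 - s - t = (N0 - s) + (N1 - t) by ring]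

theorem hasDerivAt_G_fst {N0 N1 s t : ℝ} (h : s + t ≠ 0) (h' : (N0 - s) + (N1 - t) ≠ 0) :
    HasDerivAt (fun u => G N0 N1 u t)
      ((s ^ 2 + 2 * s * t - t ^ 2) / (s + t) ^ 2
        - ((N0 - s) ^ 2 + 2 * (N0 - s) * (N1 - t) - (N1 - t) ^ 2) / ((N0 - s) + (N1 - t)) ^ 2) s := by
  have hcomp := (hasDerivAt_sq_add_sq_div_add h').comp s ((hasDerivAt_id s).const_sub N0)
  have hsum := (hasDerivAt_sq_add_sq_div_add h).add hcomp
  simp only [G_eq_add]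
  exact hsum.congr_deriv (by ring)

theorem sq_add_two_mul_sub_sq_div_sq_sub_eq {s n m0 m1 : ℝ} (hs : s + n ≠ 0) (hm : m0 + m1 ≠ 0)
    (hm0 : m0 ≠ 0) (hm1 : m1 ≠ 0) :
    (s ^ 2 + 2 * s * n - n ^ 2) / (s + n) ^ 2 - (m0 ^ 2 + 2 * m0 * m1 - m1 ^ 2) / (m0 + m1) ^ 2
      = 2 * m1 * m0 * (s * m1 + n * m0 + 2 * n * m1) / ((s + n) ^ 2 * (m0 + m1) ^ 2)
        * (s / m0 - n / m1) := by
  field_simp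
  ring

theorem stmt9_general (N0 N1 n1 : ℝ)
    (hn1 : 0 < n1) (hn1' : n1 < N1) :
    ∀ s : ℝ, 0 < s → s < N0 →
      HasDerivAt (fun u => G N0 N1 u n1)
        (2 * (N1 - n1) * (N0 - s) *
            (s * (N1 - n1) + n1 * (N0 - s) + 2 * n1 * (N1 - n1)) /
            ((s + n1) ^ 2 * ((N0 - s) + (N1 - n1)) ^ 2) *
          (s / (N0 - s) - n1 / (N1 - n1))) s := by
  intro s hs hs'
  have hm0 : 0 < N0 - s := sub_pos.mpr hs'
  have hm1 : 0 < N1 - n1 := sub_pos.mpr hn1'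
  rw [← sq_add_two_mul_sub_sq_div_sq_sub_eq (by positivity) (by positivity) hm0.ne' hm1.ne']
  exact hasDerivAt_G_fst (by positivity) (by positivity)

theorem stmt9 (N0 N1 n1 : ℝ) (hN0 : 0 < N0) (hN1 : 0 < N1)
    (hn1 : 0 < n1) (hn1' : n1 < N1) :
    ∀ s : ℝ, 0 < s → s < N0 →
      HasDerivAt (fun u => G N0 N1 u n1)
        (2 * (N1 - n1) * (N0 - s) *
            (s * (N1 - n1) + n1 * (N0 - s) + 2 * n1 * (N1 - n1)) /
            ((s + n1) ^ 2 * ((N0 - s) + (N1 - n1)) ^ 2) *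
          (s / (N0 - s) - n1 / (N1 - n1))) s :=
  stmt9_general N0 N1 n1 hn1 hn1'
end

section
/- Fix a real number n1 with 0 < n1 < N1, and set s* = N0·n1/N1. Then the function s ↦ G(s, n1) is strictly decreasing on the interval [0, s*] and strictly increasing on the interval [s*, N0]; consequently G(·, n1) attains its minimum over [0, N0] uniquely at s = s*, i.e. the point where n0/N0 = n1/N1. -/
/-!
Since `(s² + t²)/(s + t) = s - t + 2t²/(s + t)`, one has
`G(s,t) = N0 - N1 + 2 (t²/a + (N1 - t)²/b)` with `a = s + t`, `b = N0 + N1 - s - t`.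
As `a + b` is fixed, `p²/a + q²/b` strictly decreases while the ratio `a : b` moves towards
`p : q`, and for `p = t`, `q = N1 - t` that ratio is reached exactly at `s = N0 t / N1`.
-/

open Set

/-- With `a + b = a' + b'` fixed, moving from `(a, b)` to `(a', b')` towards the ratio `p : q`
(but not past it) strictly decreases `p²/a + q²/b`. -/
lemma sq_div_add_sq_div_lt {p q a b a' b' : ℝ} (hp : 0 ≤ p) (hq : 0 < q) (ha : 0 < a)
    (haa' : a < a') (hsum : a + b = a' + b') (hbal : q * a' ≤ p * b') :
    p ^ 2 / a' + q ^ 2 / b' < p ^ 2 / a + q ^ 2 / b := by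
  obtain rfl : b = a' + b' - a := by linarith
  have ha' : 0 < a' := ha.trans haa'
  have hb' : 0 < b' := by nlinarith
  have hb : 0 < a' + b' - a := by linarith
  have hlt : q * a < p * (a' + b' - a) :=
    calc q * a < q * a' := mul_lt_mul_of_pos_left haa' hq
      _ ≤ p * b' := hbal
      _ ≤ p * (a' + b' - a) := mul_le_mul_of_nonneg_left (by linarith) hp
  have hprod : q ^ 2 * (a * a') < p ^ 2 * ((a' + b' - a) * b') :=
    calc q ^ 2 * (a * a') = (q * a) * (q * a') := by ring
      _ < (p * (a' + b' - a)) * (q * a') := mul_lt_mul_of_pos_right hlt (by positivity)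
      _ ≤ (p * (a' + b' - a)) * (p * b') := mul_le_mul_of_nonneg_left hbal (by positivity)
      _ = p ^ 2 * ((a' + b' - a) * b') := by ring
  have hdiff : p ^ 2 / a' + q ^ 2 / b' - (p ^ 2 / a + q ^ 2 / (a' + b' - a)) =
      (a - a') * (p ^ 2 * ((a' + b' - a) * b') - q ^ 2 * (a * a')) /
        (a * a' * (a' + b' - a) * b') := by
    field_simp
    ring
  have hneg : (a - a') * (p ^ 2 * ((a' + b' - a) * b') - q ^ 2 * (a * a')) /
      (a * a' * (a' + b' - a) * b') < 0 :=
    div_neg_of_neg_of_pos (mul_neg_of_neg_of_pos (by linarith) (by linarith)) (by positivity)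
  linarith

lemma G_eq_sq_div_add_sq_div {N0 N1 s t : ℝ} (hs : s + t ≠ 0) (hs' : N0 + N1 - s - t ≠ 0) :
    G N0 N1 s t = N0 - N1 + 2 * (t ^ 2 / (s + t) + (N1 - t) ^ 2 / (N0 + N1 - s - t)) := by
  unfold G
  field_simp
  ring

section Monotonicity

variable {N0 N1 t : ℝ}

lemma G_strictAntiOn (ht : 0 < t) (htN : t < N1) :
    StrictAntiOn (fun s => G N0 N1 s t) (Icc 0 (N0 * t / N1)) := by
  rintro s ⟨hs, -⟩ s' ⟨-, hs'⟩ hss'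
  have hbal : s' * N1 ≤ N0 * t := (le_div_iff₀ (ht.trans htN)).1 hs'
  have hb' : 0 < N0 + N1 - s' - t := by nlinarith
  have key : t ^ 2 / (s' + t) + (N1 - t) ^ 2 / (N0 + N1 - s' - t) <
      t ^ 2 / (s + t) + (N1 - t) ^ 2 / (N0 + N1 - s - t) :=
    sq_div_add_sq_div_lt ht.le (by linarith) (by linarith) (by linarith) (by ring)
      (by nlinarith)
  dsimp only
  rw [G_eq_sq_div_add_sq_div (s := s) (by linarith) (by linarith),
    G_eq_sq_div_add_sq_div (s := s') (by linarith) hb'.ne']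
  linarith

lemma G_strictMonoOn (ht : 0 < t) (htN : t < N1) :
    StrictMonoOn (fun s => G N0 N1 s t) (Icc (N0 * t / N1) N0) := by
  rintro s ⟨hs, -⟩ s' ⟨-, hs'⟩ hss'
  have hbal : N0 * t ≤ s * N1 := (div_le_iff₀ (ht.trans htN)).1 hs
  have hs0 : 0 < s := by nlinarith [mul_pos (sub_pos.2 (hss'.trans_le hs')) ht]
  -- the roles of `s + t` and `N0 + N1 - s - t` are exchanged on this side of `N0 t / N1`
  have key : (N1 - t) ^ 2 / (N0 + N1 - s - t) + t ^ 2 / (s + t) <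
      (N1 - t) ^ 2 / (N0 + N1 - s' - t) + t ^ 2 / (s' + t) :=
    sq_div_add_sq_div_lt (by linarith) ht (by linarith) (by linarith) (by ring) (by nlinarith)
  dsimp only
  rw [G_eq_sq_div_add_sq_div (s := s) (by linarith) (by linarith),
    G_eq_sq_div_add_sq_div (s := s') (by linarith) (by linarith)]
  linarith

end Monotonicity

theorem stmt12 (N0 N1 n1 : ℝ) (hN0 : 0 < N0) (hN1 : 0 < N1)
    (hn1 : 0 < n1) (hn1' : n1 < N1) :
    StrictAntiOn (fun s => G N0 N1 s n1) (Set.Icc 0 (N0 * n1 / N1)) ∧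
    StrictMonoOn (fun s => G N0 N1 s n1) (Set.Icc (N0 * n1 / N1) N0) ∧
    ∀ s ∈ Set.Icc (0 : ℝ) N0, s ≠ N0 * n1 / N1 →
      G N0 N1 (N0 * n1 / N1) n1 < G N0 N1 s n1 := by
  have hanti := G_strictAntiOn (N0 := N0) hn1 hn1'
  have hmono := G_strictMonoOn (N0 := N0) hn1 hn1'
  have hc0 : 0 ≤ N0 * n1 / N1 := by positivity
  have hcN0 : N0 * n1 / N1 ≤ N0 := by
    rw [div_le_iff₀ hN1]
    nlinarith
  refine ⟨hanti, hmono, fun s hs hne => ?_⟩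
  rcases hne.lt_or_gt with h | h
  · exact hanti ⟨hs.1, h.le⟩ ⟨hc0, le_rfl⟩ h
  · exact hmono ⟨le_rfl, hcN0⟩ ⟨h.le, hs.2⟩ h
end
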